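/- arXiv:cs/0510033 — 7 statements merged into one kernel-verified Lean document; each statement's English description precedes it below -/
import Mathlib

section
/- For every integer q ≥ 2, the capacity of the q-GP constraint equals the limit of the capacities of the q-GP(t) constraints: H_q = lim_{t→∞} H_q(t) = inf_{t≥1} H_q(t). (Proposition 2) -/
/-- The q-GP constraint (unbounded memory), positions 0-indexed. -/
def SatisfiesGP {q n : ℕ} (x : Fin n → Fin q) : Prop :=
  ∀ k l m : Fin n, (x k).val ≠ 0 → x k = x l → x l = x m →
    ∀ i : Fin n, ((i : ℕ) : ℤ) = ((k : ℕ) : ℤ) + ((l : ℕ) : ℤ) - ((m : ℕ) : ℤ) →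
      (x i).val ≠ 0

/-- The q-GP(t) constraint, positions 0-indexed. -/
def SatisfiesGPt {q : ℕ} (t : ℕ) {n : ℕ} (x : Fin n → Fin q) : Prop :=
  ∀ k l m : Fin n, (x k).val ≠ 0 → x k = x l → x l = x m →
    max (max |((k : ℕ) : ℤ) - ((l : ℕ) : ℤ)| |((l : ℕ) : ℤ) - ((m : ℕ) : ℤ)|)
        |((m : ℕ) : ℤ) - ((k : ℕ) : ℤ)| ≤ (t : ℤ) →
    ∀ i : Fin n, ((i : ℕ) : ℤ) = ((k : ℕ) : ℤ) + ((l : ℕ) : ℤ) - ((m : ℕ) : ℤ) →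
      (x i).val ≠ 0

/-- The componentwise "absolute value" map `ξ`. -/
def xiMap {q n : ℕ} (x : Fin n → Fin q) : Fin n → Fin 2 :=
  fun i => if (x i).val = 0 then 0 else 1

/-- `B q n = ξ(T_q(n))`. -/
def B (q n : ℕ) : Set (Fin n → Fin 2) :=
  {y | ∃ x : Fin n → Fin q, SatisfiesGP x ∧ y = xiMap x}

/-- `Bt q t n = ξ(T_{q;t}(n))`. -/
def Bt (q t n : ℕ) : Set (Fin n → Fin 2) :=
  {y | ∃ x : Fin n → Fin q, SatisfiesGPt t x ∧ y = xiMap x}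

/-!
Every q-GP word is q-GP(t), so `H_q ≤ H_q(t)`. Conversely, the two constraints coincide on words
of length at most `t + 1`. Since a q-GP(t) word restricts to q-GP(t) words on both halves,
`n ↦ log₂ |B_{q;t}(n)|` is subadditive, and Fekete's lemma gives
`H_q(t) ≤ log₂ |B_{q;t}(t+1)| / (t+1) = log₂ |B_q(t+1)| / (t+1)`, which tends to `H_q`.
-/

open Filter Topology Set

namespace Real

variable {b : ℝ}

lemma logb_natCast_nonneg (hb : 1 ≤ b) (n : ℕ) : 0 ≤ logb b n :=
  div_nonneg (log_natCast_nonneg n) (log_nonneg hb)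

lemma logb_natCast_le_logb_natCast (hb : 1 < b) {m n : ℕ} (h : m ≤ n) :
    logb b m ≤ logb b n := by
  rcases Nat.eq_zero_or_pos m with rfl | hm
  · simpa using logb_natCast_nonneg hb.le n
  · exact logb_le_logb_of_le hb (by positivity) (by exact_mod_cast h)

lemma logb_natCast_le_add_of_le_mul (hb : 1 < b) {a m n : ℕ} (h : a ≤ m * n) :
    logb b a ≤ logb b m + logb b n := by
  rcases Nat.eq_zero_or_pos a with rfl | ha
  · simpa using add_nonneg (logb_natCast_nonneg hb.le m) (logb_natCast_nonneg hb.le n)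
  · have hm : m ≠ 0 := by rintro rfl; omega
    have hn : n ≠ 0 := by rintro rfl; omega
    rw [← logb_mul (by positivity) (by positivity), ← Nat.cast_mul]
    exact logb_natCast_le_logb_natCast hb h

end Real

theorem Subadditive.le_div_of_tendsto {u : ℕ → ℝ} (h : Subadditive u)
    (hbdd : BddBelow (range fun n => u n / n)) {L : ℝ}
    (hL : Tendsto (fun n => u n / n) atTop (𝓝 L)) {n : ℕ} (hn : n ≠ 0) : L ≤ u n / n :=
  tendsto_nhds_unique hL (h.tendsto_lim hbdd) ▸ h.lim_le_div hbdd hn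

section Constraints

variable {q t n : ℕ}

lemma SatisfiesGP.satisfiesGPt {x : Fin n → Fin q} (h : SatisfiesGP x) : SatisfiesGPt t x :=
  fun k l m hk hkl hlm _ => h k l m hk hkl hlm

lemma SatisfiesGPt.satisfiesGP {x : Fin n → Fin q} (h : SatisfiesGPt t x) (hn : n ≤ t + 1) :
    SatisfiesGP x := by
  intro k l m hk hkl hlm
  refine h k l m hk hkl hlm ?_
  have := k.isLt; have := l.isLt; have := m.isLt
  simp only [max_le_iff, abs_le]
  omega

lemma SatisfiesGPt.comp_shift {m : ℕ} {x : Fin n → Fin q} (h : SatisfiesGPt t x)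
    {e : Fin m → Fin n} (a : ℕ) (he : ∀ i, (e i : ℕ) = i + a) : SatisfiesGPt t (x ∘ e) := by
  have hsub : ∀ i j, ((e i : ℕ) : ℤ) - (e j : ℕ) = (i : ℕ) - (j : ℕ) := by
    intro i j; rw [he, he]; push_cast; ring
  intro k l m' hk hkl hlm hmax i hi
  refine h (e k) (e l) (e m') hk hkl hlm (by simpa only [hsub] using hmax) (e i) ?_
  rw [he, he, he, he]; push_cast; omega

lemma B_subset_Bt : B q n ⊆ Bt q t n := by
  rintro _ ⟨x, hx, rfl⟩
  exact ⟨x, hx.satisfiesGPt, rfl⟩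

lemma Bt_eq_B (hn : n ≤ t + 1) : Bt q t n = B q n := by
  refine Subset.antisymm ?_ B_subset_Bt
  rintro _ ⟨x, hx, rfl⟩
  exact ⟨x, hx.satisfiesGP hn, rfl⟩

lemma appendEquiv_symm_image_Bt_subset (m : ℕ) :
    (Fin.appendEquiv n m).symm '' Bt q t (n + m) ⊆ Bt q t n ×ˢ Bt q t m := by
  rintro _ ⟨_, ⟨x, hx, rfl⟩, rfl⟩
  exact ⟨⟨_, hx.comp_shift 0 fun _ => rfl, rfl⟩, ⟨_, hx.comp_shift n fun _ => add_comm _ _, rfl⟩⟩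

lemma card_Bt_add_le (m : ℕ) :
    Nat.card (Bt q t (n + m)) ≤ Nat.card (Bt q t n) * Nat.card (Bt q t m) := by
  simp only [Nat.card_coe_set_eq, ← ncard_prod]
  rw [← ncard_image_of_injective _ (Fin.appendEquiv n m).symm.injective]
  exact ncard_le_ncard (appendEquiv_symm_image_Bt_subset m) (toFinite _)

lemma subadditive_logb_card_Bt (q t : ℕ) :
    Subadditive fun n => Real.logb 2 (Nat.card (Bt q t n)) :=
  fun _ _ => Real.logb_natCast_le_add_of_le_mul one_lt_two (card_Bt_add_le _)

lemma bddBelow_logb_card_Bt_div (q t : ℕ) :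
    BddBelow (range fun n : ℕ => Real.logb 2 (Nat.card (Bt q t n)) / n) := by
  refine ⟨0, ?_⟩
  rintro _ ⟨n, rfl⟩
  exact div_nonneg (Real.logb_natCast_nonneg one_le_two _) n.cast_nonneg

end Constraints

theorem capacity_eq_lim_eq_inf_general (q : ℕ) (Hq : ℝ) (Hqt : ℕ → ℝ)
    (hHq : Filter.Tendsto
      (fun n : ℕ => Real.logb 2 (Nat.card ↥(B q n)) / (n : ℝ))
      Filter.atTop (nhds Hq))
    (hHqt : ∀ t : ℕ, 1 ≤ t → Filter.Tendsto
      (fun n : ℕ => Real.logb 2 (Nat.card ↥(Bt q t n)) / (n : ℝ))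
      Filter.atTop (nhds (Hqt t))) :
    Filter.Tendsto (fun t : ℕ => Hqt t) Filter.atTop (nhds Hq) ∧
    Hq = ⨅ t : {s : ℕ // 1 ≤ s}, Hqt t.1 := by
  have hle : ∀ t, 1 ≤ t → Hq ≤ Hqt t := fun t ht =>
    le_of_tendsto_of_tendsto' hHq (hHqt t ht) fun n =>
      div_le_div_of_nonneg_right (Real.logb_natCast_le_logb_natCast one_lt_two
        (Nat.card_mono (toFinite _) B_subset_Bt)) n.cast_nonneg
  have hub : ∀ t, 1 ≤ t → Hqt t ≤ Real.logb 2 (Nat.card (B q (t + 1))) / ((t + 1 : ℕ) : ℝ) :=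
    fun t ht => Bt_eq_B (q := q) le_rfl ▸ (subadditive_logb_card_Bt q t).le_div_of_tendsto
      (bddBelow_logb_card_Bt_div q t) (hHqt t ht) t.succ_ne_zero
  have htend : Tendsto Hqt atTop (𝓝 Hq) :=
    tendsto_of_tendsto_of_tendsto_of_le_of_le' tendsto_const_nhds
      (hHq.comp (tendsto_add_atTop_nat 1))
      (eventually_atTop.2 ⟨1, hle⟩) (eventually_atTop.2 ⟨1, hub⟩)
  refine ⟨htend, le_antisymm (le_ciInf fun t => hle t.1 t.2) (ge_of_tendsto htend ?_)⟩
  filter_upwards [eventually_ge_atTop 1] with t ht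
  exact ciInf_le ⟨Hq, by rintro _ ⟨s, rfl⟩; exact hle s.1 s.2⟩ (⟨t, ht⟩ : {s : ℕ // 1 ≤ s})

/-- **Proposition 2.** For every `q ≥ 2`, if `Hq` is the capacity of the q-GP
constraint and `Hqt t` is the capacity of the q-GP(t) constraint for each `t ≥ 1`
(both defined as the limits of `(log₂|B(n)|)/n`, which exist), then
`H_q = lim_{t→∞} H_q(t) = inf_{t ≥ 1} H_q(t)`. -/
theorem capacity_eq_lim_eq_inf (q : ℕ) (hq : 2 ≤ q) (Hq : ℝ) (Hqt : ℕ → ℝ)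
    (hHq : Filter.Tendsto
      (fun n : ℕ => Real.logb 2 (Nat.card ↥(B q n)) / (n : ℝ))
      Filter.atTop (nhds Hq))
    (hHqt : ∀ t : ℕ, 1 ≤ t → Filter.Tendsto
      (fun n : ℕ => Real.logb 2 (Nat.card ↥(Bt q t n)) / (n : ℝ))
      Filter.atTop (nhds (Hqt t))) :
    Filter.Tendsto (fun t : ℕ => Hqt t) Filter.atTop (nhds Hq) ∧
    Hq = ⨅ t : {s : ℕ // 1 ≤ s}, Hqt t.1 :=
  capacity_eq_lim_eq_inf_general q Hq Hqt hHq hHqt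
end

section
/- For every n ≥ 1, a binary sequence x = (x_1,…,x_n) ∈ {0,1}^n satisfies the BGP constraint if and only if there exist integers a, d ∈ [0, n] such that supp(x) = (a + dℤ) ∩ [n], i.e. the positions of the ones in x form an arithmetic progression. (Theorem 3) -/
/-- A binary sequence `x = (x_1, …, x_n)` (indexed here by `Fin n`, so position
`i : Fin n` corresponds to the paper's position `i + 1`) satisfies the binary
ghost-pulse (BGP) constraint: for all positions `k, l, m` in the support of `x`
(not necessarily distinct), if the integer `k + l - m` is a valid position then it
also lies in the support of `x`. -/
def SatisfiesBGP {n : ℕ} (x : Fin n → Fin 2) : Prop :=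
  ∀ k l m : Fin n, (x k).val ≠ 0 → (x l).val ≠ 0 → (x m).val ≠ 0 →
    ∀ i : Fin n, ((i : ℕ) : ℤ) = ((k : ℕ) : ℤ) + ((l : ℕ) : ℤ) - ((m : ℕ) : ℤ) →
      (x i).val ≠ 0

/-!
If `a < b` are consecutive elements of a set `S ⊆ [n]` with the BGP property, then
`s ↦ s + (b - a)` and `s ↦ s - (b - a)` map `S` into itself as long as they stay in `[n]`,
so `S` contains all of `(a + (b - a)ℤ) ∩ [n]`. Conversely, reducing `s ∈ S` modulo `b - a`
by such steps lands on an element of `S` in `[a, b)`, which can only be `a`.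
-/

open Set

/-- The BGP constraint for a set `S` of integer positions inside a window `I`. -/
def GhostClosed (S I : Set ℤ) : Prop :=
  ∀ k ∈ S, ∀ l ∈ S, ∀ m ∈ S, k + l - m ∈ I → k + l - m ∈ S

namespace GhostClosed

variable {S I : Set ℤ} {a b s : ℤ}

theorem add_natCast_mul_sub_mem (hI : I.OrdConnected) (hSI : S ⊆ I) (hS : GhostClosed S I)
    (ha : a ∈ S) (hb : b ∈ S) (hs : s ∈ S) :
    ∀ j : ℕ, s + j * (b - a) ∈ I → s + j * (b - a) ∈ S
  | 0, _ => by simpa using hs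
  | j + 1, hj => by
    have hmid : s + j * (b - a) ∈ uIcc s (s + (j + 1 : ℕ) * (b - a)) := by
      push_cast
      rcases le_total a b with hab | hab
      · exact mem_uIcc.2 (Or.inl ⟨by nlinarith, by nlinarith⟩)
      · exact mem_uIcc.2 (Or.inr ⟨by nlinarith, by nlinarith⟩)
    have hprev := add_natCast_mul_sub_mem hI hSI hS ha hb hs j (hI.uIcc_subset (hSI hs) hj hmid)
    have hstep : s + (j + 1 : ℕ) * (b - a) = s + j * (b - a) + b - a := by push_cast; ring
    rw [hstep] at hj ⊢
    exact hS _ hprev _ hb _ ha hj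

theorem add_mul_sub_mem (hI : I.OrdConnected) (hSI : S ⊆ I) (hS : GhostClosed S I)
    (ha : a ∈ S) (hb : b ∈ S) (hs : s ∈ S) (j : ℤ) (hj : s + j * (b - a) ∈ I) :
    s + j * (b - a) ∈ S := by
  rcases j.eq_nat_or_neg with ⟨j, rfl | rfl⟩
  · exact add_natCast_mul_sub_mem hI hSI hS ha hb hs j hj
  · have hswap : s + -(j : ℤ) * (b - a) = s + j * (a - b) := by ring
    rw [hswap] at hj ⊢
    exact add_natCast_mul_sub_mem hI hSI hS hb ha hs j hj

theorem mem_iff_dvd_of_consecutive (hI : I.OrdConnected) (hSI : S ⊆ I) (hS : GhostClosed S I)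
    (ha : a ∈ S) (hb : b ∈ S) (hab : a < b) (hgap : ∀ s ∈ S, a < s → b ≤ s) {z : ℤ}
    (hz : z ∈ I) : z ∈ S ↔ b - a ∣ z - a := by
  have hd : 0 < b - a := sub_pos.2 hab
  constructor
  · intro hzS
    set r := (z - a) % (b - a)
    have hr : a + r = z + -((z - a) / (b - a)) * (b - a) := by
      linear_combination Int.emod_add_mul_ediv (z - a) (b - a)
    have hr0 : 0 ≤ r := Int.emod_nonneg _ hd.ne'
    have hrd : r < b - a := Int.emod_lt_of_pos _ hd
    have hrI : a + r ∈ I :=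
      hI.uIcc_subset (hSI ha) (hSI hb) (mem_uIcc.2 (Or.inl ⟨by linarith, by linarith⟩))
    have hrS : a + r ∈ S := by
      rw [hr] at hrI ⊢
      exact add_mul_sub_mem hI hSI hS ha hb hzS _ hrI
    have hr_zero : r = 0 := by
      by_contra hr'
      linarith [hgap _ hrS (by omega)]
    exact Int.dvd_of_emod_eq_zero hr_zero
  · rintro ⟨j, hj⟩
    have hz' : z = a + j * (b - a) := by linear_combination hj
    rw [hz'] at hz ⊢
    exact add_mul_sub_mem hI hSI hS ha hb ha j hz

theorem exists_forall_mem_iff_dvd (hI : I.OrdConnected) (hSI : S ⊆ I) (hS : GhostClosed S I)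
    (hfin : S.Finite) (hne : S.Nonempty) :
    ∃ a ∈ S, ∃ b ∈ S, a ≤ b ∧ ∀ z ∈ I, z ∈ S ↔ b - a ∣ z - a := by
  rcases S.subsingleton_or_nontrivial with hsub | hnt
  · obtain ⟨a, ha⟩ := hne
    refine ⟨a, ha, a, ha, le_rfl, fun z _ => ?_⟩
    rw [sub_self, zero_dvd_iff, sub_eq_zero]
    exact ⟨fun hz => hsub hz ha, fun h => h ▸ ha⟩
  · obtain ⟨a, ha, c, hc, hac⟩ := hnt.exists_lt
    obtain ⟨b, ⟨hb, hab⟩, hmin⟩ :=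
      exists_min_image {s ∈ S | a < s} id (hfin.subset (sep_subset _ _)) ⟨c, hc, hac⟩
    exact ⟨a, ha, b, hb, hab.le,
      fun z => mem_iff_dvd_of_consecutive hI hSI hS ha hb hab fun s hs has => hmin s ⟨hs, has⟩⟩

end GhostClosed

/-- The support of `x`, shifted to the paper's 1-indexed positions. -/
def positions {n : ℕ} (x : Fin n → Fin 2) : Set ℤ :=
  {z | ∃ i : Fin n, (x i).val ≠ 0 ∧ ((i : ℕ) : ℤ) + 1 = z}

section positions

variable {n : ℕ} (x : Fin n → Fin 2)

theorem Fin.coe_add_one_mem_Icc (i : Fin n) : ((i : ℕ) : ℤ) + 1 ∈ Icc (1 : ℤ) n := by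
  have := i.isLt
  constructor <;> omega

theorem positions_subset_Icc : positions x ⊆ Icc 1 n := by
  rintro _ ⟨i, -, rfl⟩
  exact i.coe_add_one_mem_Icc

theorem coe_add_one_mem_positions (i : Fin n) :
    ((i : ℕ) : ℤ) + 1 ∈ positions x ↔ (x i).val ≠ 0 := by
  refine ⟨?_, fun h => ⟨i, h, rfl⟩⟩
  rintro ⟨i', h, hi'⟩
  obtain rfl : i' = i := Fin.ext (by omega)
  exact h

theorem SatisfiesBGP.ghostClosed (hx : SatisfiesBGP x) : GhostClosed (positions x) (Icc 1 n) := by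
  rintro _ ⟨k, hk, rfl⟩ _ ⟨l, hl, rfl⟩ _ ⟨m, hm, rfl⟩ ⟨h1, hn⟩
  let i : Fin n := ⟨(k + l - m : ℤ).toNat, by omega⟩
  exact ⟨i, hx k l m hk hl hm i (by simp only [i]; omega), by simp only [i]; omega⟩

end positions

theorem bgp_iff_arithmetic_progression_general (n : ℕ) (x : Fin n → Fin 2) :
    SatisfiesBGP x ↔
      ∃ a d : ℕ, a ≤ n ∧ d ≤ n ∧
        ∀ i : Fin n,
          ((x i).val ≠ 0 ↔ ∃ j : ℤ, ((i : ℕ) : ℤ) + 1 = (a : ℤ) + (d : ℤ) * j) := by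
  constructor
  · intro hx
    rcases (positions x).eq_empty_or_nonempty with hempty | hne
    · refine ⟨0, 0, n.zero_le, n.zero_le, fun i => ?_⟩
      rw [← coe_add_one_mem_positions, hempty]
      simp only [mem_empty_iff_false, false_iff, not_exists]
      omega
    · obtain ⟨a, ha, b, hb, hab, hS⟩ := hx.ghostClosed.exists_forall_mem_iff_dvd ordConnected_Icc
        (positions_subset_Icc x) ((finite_Icc 1 (n : ℤ)).subset (positions_subset_Icc x)) hne
      obtain ⟨ha1, han⟩ := positions_subset_Icc x ha
      obtain ⟨-, hbn⟩ := positions_subset_Icc x hb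
      lift a to ℕ using by omega
      lift b to ℕ using by omega
      refine ⟨a, b - a, by omega, by omega, fun i => ?_⟩
      rw [← coe_add_one_mem_positions, hS _ i.coe_add_one_mem_Icc, Nat.cast_sub (by omega)]
      exact exists_congr fun j => sub_eq_iff_eq_add'
  · rintro ⟨a, d, -, -, h⟩ k l m hk hl hm i hi
    obtain ⟨j₁, h₁⟩ := (h k).1 hk
    obtain ⟨j₂, h₂⟩ := (h l).1 hl
    obtain ⟨j₃, h₃⟩ := (h m).1 hm
    exact (h i).2 ⟨j₁ + j₂ - j₃, by linear_combination hi + h₁ + h₂ - h₃⟩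

/-- **Theorem 3.** For `n ≥ 1`, a binary sequence `x ∈ {0,1}ⁿ` satisfies the BGP
constraint if and only if there exist `a, d ∈ [0, n]` such that
`supp(x) = (a + dℤ) ∩ [n]`: the (1-indexed) position `i + 1` of `x` is in the
support iff `i + 1 = a + d·j` for some integer `j`. -/
theorem bgp_iff_arithmetic_progression (n : ℕ) (hn : 1 ≤ n) (x : Fin n → Fin 2) :
    SatisfiesBGP x ↔
      ∃ a d : ℕ, a ≤ n ∧ d ≤ n ∧
        ∀ i : Fin n,
          ((x i).val ≠ 0 ↔ ∃ j : ℤ, ((i : ℕ) : ℤ) + 1 = (a : ℤ) + (d : ℤ) * j) :=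
  bgp_iff_arithmetic_progression_general n x
end

section
/- For every n ≥ 1, there are at most (n+1)² binary sequences of length n satisfying the BGP constraint, i.e. |B_2(n)| ≤ (n+1)²; consequently the capacity of the BGP constraint is zero: H_BGP = lim_{n→∞} (log₂|B_2(n)|)/n = 0. (Corollary 4) -/
/-- The set of binary sequences of length `n` satisfying the BGP constraint. -/
def B2 (n : ℕ) : Set (Fin n → Fin 2) := {x | SatisfiesBGP x}

/-!
If the support of a BGP sequence has smallest elements `a < s`, closure under `k + l - m`
forces it to be the arithmetic progression `a, s, 2s - a, …` cut off at `n`: from any larger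
element one may step down by `s - a` (take `l = a`, `m = s`), and from `a + j(s - a)` up by
`s - a` (take `l = s`, `m = a`). Hence a BGP sequence is determined by its first two ones,
which leaves at most `(n + 1)²` sequences, and polynomial growth has zero exponential rate.
-/

open Filter Topology

section GhostClosed

variable {α : Type*} [LinearOrder α]

-- `⊤` marks a missing element.
def twoSmallest (S : Finset α) : WithTop α × WithTop α :=
  (S.min, ({i ∈ S | S.min < i} : Finset α).min)

theorem Finset.isLeast_of_min_eq {S : Finset α} {a : α} (h : S.min = a) :
    IsLeast (S : Set α) a :=
  ⟨Finset.mem_of_min h, fun _ hi => Finset.min_le_of_eq hi h⟩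

variable {n : ℕ}

/-- Closure under `k + l - m` whenever the result is a position: the BGP constraint on supports. -/
def IsGhostClosed (S : Finset (Fin n)) : Prop :=
  ∀ ⦃k l m : Fin n⦄, k ∈ S → l ∈ S → m ∈ S → ∀ i : Fin n, (m : ℕ) + i = k + l → i ∈ S

/-- The ghost-closed set with smallest elements `a`, `s` is the progression `a, s, 2s - a, …`. -/
def ofTwoSmallest : WithTop (Fin n) × WithTop (Fin n) → Finset (Fin n)
  | (⊤, _) => ∅
  | ((a : Fin n), ⊤) => {a}
  | ((a : Fin n), (s : Fin n)) => {i | a ≤ i ∧ ((s : ℕ) - a) ∣ (i - a)}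

theorem IsGhostClosed.eq_filter_dvd {S : Finset (Fin n)} (hS : IsGhostClosed S) {a s : Fin n}
    (ha : IsLeast (S : Set (Fin n)) a) (hs : IsLeast {i | i ∈ S ∧ a < i} s) :
    S = ({i | a ≤ i ∧ ((s : ℕ) - a) ∣ (i - a)} : Finset (Fin n)) := by
  obtain ⟨⟨hsS, has⟩, hs_le⟩ := hs
  have has' : (a : ℕ) < s := has
  ext i
  simp only [Finset.mem_filter, Finset.mem_univ, true_and]
  constructor
  · intro hi
    refine ⟨ha.2 hi, ?_⟩
    induction i using WellFoundedLT.induction with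
    | _ i ih =>
      rcases (ha.2 hi).eq_or_lt with rfl | hai
      · simp
      have hsi : (s : ℕ) ≤ i := hs_le ⟨hi, hai⟩
      have hprev : (⟨i - (s - a), by omega⟩ : Fin n) ∈ S :=
        hS hi ha.1 hsS _ (by simp only; omega)
      have hdvd := ih _ (Fin.lt_def.mpr (by simp only; omega)) hprev
      rw [show (i : ℕ) - a = (i - (s - a) - a) + (s - a) by omega]
      exact dvd_add hdvd dvd_rfl
  · rintro ⟨hai, j, hj⟩
    induction j generalizing i with
    | zero => rw [show i = a from Fin.ext (by simp at hj; omega)]; exact ha.1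
    | succ j ih =>
      rw [Nat.mul_succ] at hj
      have hprev : (⟨a + (s - a) * j, by omega⟩ : Fin n) ∈ S :=
        ih _ (Fin.le_def.mpr (Nat.le_add_right _ _)) (Nat.add_sub_cancel_left ..)
      exact hS hprev hsS ha.1 i (by simp only; omega)

theorem IsGhostClosed.eq_ofTwoSmallest {S : Finset (Fin n)} (hS : IsGhostClosed S) :
    S = ofTwoSmallest (twoSmallest S) := by
  rw [twoSmallest]
  cases hmin : S.min using WithTop.recTopCoe with
  | top => simpa [ofTwoSmallest] using hmin
  | coe a =>
    have ha := Finset.isLeast_of_min_eq hmin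
    cases hsec : ({i ∈ S | (a : WithTop (Fin n)) < i} : Finset (Fin n)).min
      using WithTop.recTopCoe with
    | top =>
      simp only [Finset.min_eq_top, Finset.filter_eq_empty_iff, WithTop.coe_lt_coe,
        not_lt] at hsec
      exact Finset.eq_singleton_iff_unique_mem.mpr
        ⟨ha.1, fun i hi => le_antisymm (hsec hi) (ha.2 hi)⟩
    | coe s =>
      have hs := Finset.isLeast_of_min_eq hsec
      simp only [Finset.coe_filter, WithTop.coe_lt_coe] at hs
      exact hS.eq_filter_dvd ha hs

theorem IsGhostClosed.injOn_twoSmallest :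
    Set.InjOn twoSmallest {S : Finset (Fin n) | IsGhostClosed S} := fun _ hS _ hT h =>
  hS.eq_ofTwoSmallest.trans (h ▸ hT.eq_ofTwoSmallest.symm)

end GhostClosed

def supp {n : ℕ} (x : Fin n → Fin 2) : Finset (Fin n) := {i | (x i).val ≠ 0}

theorem supp_injective (n : ℕ) : Function.Injective (supp (n := n)) := by
  intro x y h
  funext i
  have hi := Finset.ext_iff.mp h i
  simp only [supp, Finset.mem_filter, Finset.mem_univ, true_and] at hi
  omega

theorem SatisfiesBGP.isGhostClosed {n : ℕ} {x : Fin n → Fin 2} (hx : SatisfiesBGP x) :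
    IsGhostClosed (supp x) := by
  intro k l m hk hl hm i hi
  simp only [supp, Finset.mem_filter, Finset.mem_univ, true_and] at *
  exact hx k l m hk hl hm i (by omega)

theorem card_B2_le (n : ℕ) : Nat.card (B2 n) ≤ (n + 1) ^ 2 := by
  have hinj : Function.Injective fun x : B2 n => twoSmallest (supp x.1) := fun x y h =>
    Subtype.ext <| supp_injective n <|
      IsGhostClosed.injOn_twoSmallest x.2.isGhostClosed y.2.isGhostClosed h
  calc Nat.card (B2 n) ≤ Nat.card (WithTop (Fin n) × WithTop (Fin n)) :=
        Nat.card_le_card_of_injective _ hinj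
    _ = (n + 1) ^ 2 := by simp [← sq, WithTop]

theorem tendsto_logb_div_atTop_zero_of_le_pow (b : ℝ) {f : ℕ → ℕ} {k : ℕ}
    (hf : ∀ n, f n ≤ (n + 1) ^ k) :
    Tendsto (fun n : ℕ => Real.logb b (f n) / n) atTop (𝓝 0) := by
  have hlog_le (n : ℕ) : Real.log (f n) ≤ k * Real.log (n + 1) := by
    rcases (f n).eq_zero_or_pos with h | h
    · rw [h, Nat.cast_zero, Real.log_zero]
      exact mul_nonneg k.cast_nonneg (Real.log_nonneg (le_add_of_nonneg_left n.cast_nonneg))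
    rw [← Real.log_pow]
    exact Real.log_le_log (by exact_mod_cast h) (by exact_mod_cast hf n)
  have hlog_succ : Tendsto (fun n : ℕ => Real.log (n + 1) / n) atTop (𝓝 0) := by
    have := (Real.tendsto_pow_log_div_mul_add_atTop 1 (-1) 1 one_ne_zero).comp
      (tendsto_atTop_add_const_right _ 1 tendsto_natCast_atTop_atTop)
    simpa [Function.comp_def] using this
  have hlog : Tendsto (fun n : ℕ => Real.log (f n) / n) atTop (𝓝 0) := by
    refine squeeze_zero (fun n => div_nonneg (Real.log_natCast_nonneg _) n.cast_nonneg)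
      (fun n => ?_) (by simpa using hlog_succ.const_mul (k : ℝ))
    rw [mul_div_assoc']
    exact div_le_div_of_nonneg_right (hlog_le n) n.cast_nonneg
  simpa [Real.logb, div_right_comm] using hlog.div_const (Real.log b)

/-- **Corollary 4.** For every `n ≥ 1` there are at most `(n+1)²` binary sequences
of length `n` satisfying the BGP constraint, and consequently the capacity of the
BGP constraint is zero: `lim_{n→∞} (log₂|B_2(n)|)/n = 0`. -/
theorem bgp_capacity_zero :
    (∀ n : ℕ, 1 ≤ n → Nat.card ↥(B2 n) ≤ (n + 1) ^ 2) ∧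
    Filter.Tendsto (fun n : ℕ => Real.logb 2 (Nat.card ↥(B2 n)) / (n : ℝ))
      Filter.atTop (nhds 0) :=
  ⟨fun n _ => card_B2_le n, tendsto_logb_div_atTop_zero_of_le_pow 2 card_B2_le⟩
end

section
/- For every n ≥ 1, the number of binary sequences of length n satisfying the BGP constraint is exactly |B_2(n)| = (n+2)²/4 if n is even, and |B_2(n)| = (n+1)(n+3)/4 if n is odd. (Equation (26) of the paper) -/
/-!
View a sequence through its set `S ⊆ [0, n)` of pulses. If `a < b` are the two smallest
pulses, the constraint at `(a, a, b)` forces `2a < b`, at `(s, b, a)` it propagates pulses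
upwards in steps of `d = b - a`, and at `(s, a, b)` downwards; so `S` is exactly the residue
class of `a` modulo `d` inside `[0, n)`. Hence a nonempty BGP sequence is determined by its
first two pulses `a < b`, with `2a < b < n`, or by its only pulse. For fixed `b` there are
`⌈b/2⌉ + 1` choices, and `1 + ∑_{b<n} (⌈b/2⌉ + 1) = ⌊(n+2)²/4⌋`.
-/

open Finset

namespace BGP

variable {n : ℕ}

def pulses (x : Fin n → Fin 2) : Set ℕ := {i | ∃ h : i < n, x ⟨i, h⟩ ≠ 0}

lemma pulses_subset_Iio (x : Fin n → Fin 2) : pulses x ⊆ Set.Iio n := fun _ ⟨h, _⟩ => h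

@[simp]
lemma pulses_zero : pulses (0 : Fin n → Fin 2) = ∅ := by
  simp [pulses]

lemma pulses_injective : Function.Injective (pulses (n := n)) := by
  intro x y hxy
  have fin_two_eq : ∀ u v : Fin 2, (u ≠ 0 ↔ v ≠ 0) → u = v := by decide
  funext i
  exact fin_two_eq _ _ (by simpa [pulses] using Set.ext_iff.1 hxy i)

def Closed (n : ℕ) (S : Set ℕ) : Prop :=
  ∀ k ∈ S, ∀ l ∈ S, ∀ m ∈ S, ∀ i < n, i + m = k + l → i ∈ S

lemma satisfiesBGP_iff_closed (x : Fin n → Fin 2) : SatisfiesBGP x ↔ Closed n (pulses x) := by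
  simp only [SatisfiesBGP, Closed, pulses, Set.mem_ofPred_eq, Fin.val_ne_zero_iff]
  constructor
  · rintro hx k ⟨hk, hxk⟩ l ⟨hl, hxl⟩ m ⟨hm, hxm⟩ i hi hsum
    exact ⟨hi, hx _ _ _ hxk hxl hxm ⟨i, hi⟩ (by simp only; omega)⟩
  · intro hx k l m hxk hxl hxm i hi
    exact (hx k ⟨k.2, hxk⟩ l ⟨l.2, hxl⟩ m ⟨m.2, hxm⟩ i i.2 (by omega)).2

def residueClass (n a d : ℕ) : Set ℕ := {i | i < n ∧ i % d = a}

lemma closed_residueClass (n a d : ℕ) : Closed n (residueClass n a d) := by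
  rintro k ⟨-, hk⟩ l ⟨-, hl⟩ m ⟨-, hm⟩ i hi hsum
  have : i + m ≡ k + m [MOD d] := hsum ▸ Nat.ModEq.add_left k (hl.trans hm.symm)
  exact ⟨hi, Eq.trans (Nat.ModEq.add_right_cancel' m this) hk⟩

/-- `(a, b)` are the first two pulses of a periodic sequence, or `a = b` for a single pulse:
the sequence is then `residueClass n a (b - a)`, where `i % 0 = i` covers the second case. -/
def params (n : ℕ) : Finset (ℕ × ℕ) :=
  (range n ×ˢ range n).filter fun p => p.1 = p.2 ∨ 2 * p.1 < p.2

lemma mem_params {a b : ℕ} : (a, b) ∈ params n ↔ b < n ∧ (a = b ∨ 2 * a < b) := by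
  simp only [params, mem_filter, mem_product, mem_range]
  omega

lemma two_mul_lt_of_closed {S : Set ℕ} (hS : Closed n S) (hSn : S ⊆ Set.Iio n) {a b : ℕ}
    (ha : a ∈ S) (hamin : ∀ i ∈ S, a ≤ i) (hb : b ∈ S) (hab : a < b) : 2 * a < b := by
  by_contra! h
  have hlow := hS a ha a ha b hb (2 * a - b) (by have : a < n := hSn ha; omega) (by omega)
  have := hamin _ hlow
  omega

lemma eq_residueClass_of_closed {S : Set ℕ} (hS : Closed n S) (hSn : S ⊆ Set.Iio n) {a b : ℕ}
    (ha : a ∈ S) (hamin : ∀ i ∈ S, a ≤ i) (hb : b ∈ S) (hab : a < b)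
    (hbmin : ∀ i ∈ S, a < i → b ≤ i) : S = residueClass n a (b - a) := by
  have h2a := two_mul_lt_of_closed hS hSn ha hamin hb hab
  ext i
  refine ⟨fun hi => ⟨hSn hi, ?_⟩, fun ⟨hin, hi⟩ => ?_⟩
  · induction i using Nat.strong_induction_on with
    | _ i ih =>
      rcases (hamin i hi).eq_or_lt with rfl | hai
      · exact Nat.mod_eq_of_lt (by omega)
      · have hbi := hbmin i hi hai
        have hin : i < n := hSn hi
        have hdown : i - (b - a) ∈ S := hS i hi a ha b hb _ (by omega) (by omega)
        rw [Nat.mod_eq_sub_mod (by omega)]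
        exact ih _ (by omega) hdown
  · have hup : ∀ j, a + (b - a) * j < n → a + (b - a) * j ∈ S := by
      intro j
      induction j with
      | zero => exact fun _ => by simpa using ha
      | succ j ih =>
        intro hj
        rw [Nat.mul_succ] at hj ⊢
        exact hS _ (ih (by omega)) b hb a ha _ hj (by omega)
    have hdiv := Nat.mod_add_div i (b - a)
    rw [hi] at hdiv
    exact hdiv ▸ hup _ (by omega)

lemma exists_eq_residueClass {S : Set ℕ} (hS : Closed n S) (hSn : S ⊆ Set.Iio n)
    (hne : S.Nonempty) : ∃ p ∈ params n, S = residueClass n p.1 (p.2 - p.1) := by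
  set a := sInf S
  have ha : a ∈ S := Nat.sInf_mem hne
  have hamin : ∀ i ∈ S, a ≤ i := fun i hi => Nat.sInf_le hi
  by_cases hsingle : ∃ i ∈ S, a < i
  · obtain ⟨hb, hab⟩ : sInf {i | i ∈ S ∧ a < i} ∈ {i | i ∈ S ∧ a < i} :=
      Nat.sInf_mem hsingle
    refine ⟨(a, _),
      mem_params.2 ⟨hSn hb, Or.inr (two_mul_lt_of_closed hS hSn ha hamin hb hab)⟩,
      eq_residueClass_of_closed hS hSn ha hamin hb hab fun i hi hai => Nat.sInf_le ⟨hi, hai⟩⟩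
  · push Not at hsingle
    refine ⟨(a, a), mem_params.2 ⟨hSn ha, Or.inl rfl⟩, ?_⟩
    ext i
    simp only [residueClass, Nat.sub_self, Nat.mod_zero, Set.mem_ofPred_eq]
    exact ⟨fun hi => ⟨hSn hi, le_antisymm (hsingle i hi) (hamin i hi)⟩,
      fun ⟨_, hi⟩ => hi ▸ ha⟩

lemma mem_residueClass_of_mem_params {a b : ℕ} (hp : (a, b) ∈ params n) :
    a ∈ residueClass n a (b - a) ∧ b ∈ residueClass n a (b - a) := by
  obtain ⟨hbn, rfl | h2a⟩ := mem_params.1 hp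
  · simp [residueClass, hbn]
  · have hamod : a % (b - a) = a := Nat.mod_eq_of_lt (by omega)
    refine ⟨⟨by omega, hamod⟩, hbn, ?_⟩
    rw [Nat.mod_eq_sub_mod (by omega), show b - (b - a) = a by omega, hamod]

lemma eq_or_le_of_mem_residueClass {a b i : ℕ} (hp : (a, b) ∈ params n)
    (hi : i ∈ residueClass n a (b - a)) : i = a ∨ (a < b ∧ b ≤ i) := by
  obtain ⟨-, hi⟩ := hi
  obtain ⟨-, rfl | h2a⟩ := mem_params.1 hp
  · simpa using hi
  · have hai : a ≤ i := hi ▸ Nat.mod_le i (b - a)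
    by_cases hdi : b - a ≤ i
    · have := Nat.mod_le (i - (b - a)) (b - a)
      rw [Nat.mod_eq_sub_mod hdi] at hi
      omega
    · exact Or.inl (hi ▸ (Nat.mod_eq_of_lt (by omega)).symm)

lemma residueClass_injOn :
    Set.InjOn (fun p : ℕ × ℕ => residueClass n p.1 (p.2 - p.1)) (params n) := by
  rintro ⟨a, b⟩ hp ⟨a', b'⟩ hp' (h : residueClass n a (b - a) = residueClass n a' (b' - a'))
  obtain ⟨ha, hb⟩ := mem_residueClass_of_mem_params hp
  obtain ⟨ha', hb'⟩ := mem_residueClass_of_mem_params hp'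
  rw [h] at ha hb
  rw [← h] at ha' hb'
  have := eq_or_le_of_mem_residueClass hp ha'
  have := eq_or_le_of_mem_residueClass hp hb'
  have := eq_or_le_of_mem_residueClass hp' ha
  have := eq_or_le_of_mem_residueClass hp' hb
  ext <;> simp only <;> omega

def residueSeq (n a d : ℕ) : Fin n → Fin 2 := fun i => if (i : ℕ) % d = a then 1 else 0

lemma pulses_residueSeq (n a d : ℕ) : pulses (residueSeq n a d) = residueClass n a d := by
  ext i
  simp [pulses, residueSeq, residueClass]

lemma B2_eq_insert_image :
    B2 n = ↑(insert 0 ((params n).image fun p => residueSeq n p.1 (p.2 - p.1))) := by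
  ext x
  simp only [B2, Set.mem_ofPred_eq, coe_insert, coe_image, Set.mem_insert_iff, Set.mem_image,
    mem_coe, satisfiesBGP_iff_closed]
  constructor
  · intro hx
    rcases (pulses x).eq_empty_or_nonempty with h | h
    · exact Or.inl (pulses_injective (h.trans pulses_zero.symm))
    · obtain ⟨p, hp, hxp⟩ := exists_eq_residueClass hx (pulses_subset_Iio x) h
      exact Or.inr ⟨p, hp, pulses_injective (by rw [pulses_residueSeq, hxp])⟩
  · rintro (rfl | ⟨p, -, rfl⟩)
    · simp [Closed]
    · rw [pulses_residueSeq]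
      exact closed_residueClass _ _ _

lemma card_params : #(params n) = ∑ b ∈ range n, ((b + 1) / 2 + 1) := by
  rw [params, card_filter, sum_product_right]
  refine sum_congr rfl fun b hb => ?_
  rw [← card_filter]
  have hfiber :
      (range n).filter (fun a => a = b ∨ 2 * a < b) = insert b (range ((b + 1) / 2)) := by
    ext a
    simp only [mem_range] at hb
    simp only [mem_filter, mem_range, mem_insert]
    omega
  rw [hfiber, card_insert_of_notMem (by simp only [mem_range]; omega), card_range]

lemma card_B2_eq_sum : Nat.card (B2 n) = 1 + ∑ b ∈ range n, ((b + 1) / 2 + 1) := by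
  have hinj : Set.InjOn (fun p : ℕ × ℕ => residueSeq n p.1 (p.2 - p.1)) (params n) :=
    fun p hp q hq h =>
      residueClass_injOn hp hq (by simpa [pulses_residueSeq] using congrArg pulses h)
  have hzero :
      (0 : Fin n → Fin 2) ∉ (params n).image fun p => residueSeq n p.1 (p.2 - p.1) := by
    simp only [mem_image, not_exists, not_and]
    intro ⟨a, b⟩ hp h
    have hmem := (mem_residueClass_of_mem_params hp).1
    rw [← pulses_residueSeq, h, pulses_zero] at hmem
    exact hmem
  rw [B2_eq_insert_image, Nat.card_coe_set_eq, Set.ncard_coe_finset,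
    card_insert_of_notMem hzero, card_image_of_injOn hinj, card_params, add_comm]

lemma four_mul_card_B2_add_mod_two (n : ℕ) : 4 * Nat.card (B2 n) + n % 2 = (n + 2) ^ 2 := by
  rw [card_B2_eq_sum]
  induction n with
  | zero => simp
  | succ n ih =>
    have hsq : (n + 1 + 2) ^ 2 = (n + 2) ^ 2 + 2 * n + 5 := by ring
    rw [sum_range_succ]
    omega

end BGP

theorem card_B2_general (n : ℕ) :
    (Even n → 4 * Nat.card ↥(B2 n) = (n + 2) ^ 2) ∧
    (Odd n → 4 * Nat.card ↥(B2 n) = (n + 1) * (n + 3)) := by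
  have h := BGP.four_mul_card_B2_add_mod_two n
  have hsq : (n + 1) * (n + 3) + 1 = (n + 2) ^ 2 := by ring
  exact ⟨fun he => by rw [Nat.even_iff.1 he] at h; omega,
    fun ho => by rw [Nat.odd_iff.1 ho] at h; omega⟩

/-- **Equation (26).** For every `n ≥ 1`, the number of binary sequences of length
`n` satisfying the BGP constraint is exactly `(n+2)²/4` if `n` is even and
`(n+1)(n+3)/4` if `n` is odd (stated multiplied through by `4`). -/
theorem card_B2 (n : ℕ) (hn : 1 ≤ n) :
    (Even n → 4 * Nat.card ↥(B2 n) = (n + 2) ^ 2) ∧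
    (Odd n → 4 * Nat.card ↥(B2 n) = (n + 1) * (n + 3)) :=
  card_B2_general n
end

section
/- For all integers n, t ≥ 1, the set of binary sequences of length n satisfying the BGP(t) constraint equals the union of the (t,∞)-constrained sequences and the arithmetic-progression sequences with parameters at most t: B_{2;t}(n) = S_{t,∞}(n) ∪ Q_t(n). (Theorem 5) -/
/-- A binary sequence `x` of length `n` (indexed by `Fin n`, position `i : Fin n`
corresponding to the paper's 1-indexed position `i + 1`) satisfies the BGP(t)
constraint: for all positions `k, l, m` in the support of `x` (not necessarily
distinct) with `max {|k-l|, |l-m|, |m-k|} ≤ t`, if the integer `k + l - m` is a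
valid position then it also lies in the support of `x`. -/
def SatisfiesBGPt (t : ℕ) {n : ℕ} (x : Fin n → Fin 2) : Prop :=
  ∀ k l m : Fin n, (x k).val ≠ 0 → (x l).val ≠ 0 → (x m).val ≠ 0 →
    max (max |((k : ℕ) : ℤ) - ((l : ℕ) : ℤ)| |((l : ℕ) : ℤ) - ((m : ℕ) : ℤ)|)
        |((m : ℕ) : ℤ) - ((k : ℕ) : ℤ)| ≤ (t : ℤ) →
    ∀ i : Fin n, ((i : ℕ) : ℤ) = ((k : ℕ) : ℤ) + ((l : ℕ) : ℤ) - ((m : ℕ) : ℤ) →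
      (x i).val ≠ 0

/-- `B2t t n`: the set of binary sequences of length `n` satisfying BGP(t). -/
def B2t (t n : ℕ) : Set (Fin n → Fin 2) := {x | SatisfiesBGPt t x}

/-- `Sinf t n`: the set of `(t,∞)`-constrained binary sequences of length `n`,
i.e. any two distinct ones are more than `t` positions apart (at least `t` zeros
between any two ones). -/
def Sinf (t n : ℕ) : Set (Fin n → Fin 2) :=
  {x | ∀ i j : Fin n, (x i).val ≠ 0 → (x j).val ≠ 0 → i ≠ j →
    (t : ℤ) < |((i : ℕ) : ℤ) - ((j : ℕ) : ℤ)|}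

/-- `Q t n`: the set of binary sequences `x` of length `n` whose support equals
`(a + dℤ) ∩ [n]` for some `a, d ∈ [0, t]` (support in 1-indexed positions). -/
def Q (t n : ℕ) : Set (Fin n → Fin 2) :=
  {x | ∃ a d : ℕ, a ≤ t ∧ d ≤ t ∧
    ∀ i : Fin n,
      ((x i).val ≠ 0 ↔ ∃ j : ℤ, ((i : ℕ) : ℤ) + 1 = (a : ℤ) + (d : ℤ) * j)}

/-! If two ones are at distance at most `t`, let `d ≤ t` be the smallest distance between two
ones, attained at `p` and `p + d`. Reflecting a one through a one at distance `d` (the case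
`k = l` of BGP(t)) propagates the pair along the whole progression `p + dℤ` inside the window,
and a one off this progression would lie strictly between two consecutive terms of it, closer
than `d` to one of them. If no two ones are that close, BGP(t) only ever applies with
`k = l = m`. Finally, progressions are closed under `(k, l, m) ↦ k + l - m`. -/

open Set

theorem dvd_sub_of_forall_le_sub {I S : Set ℤ} (hI : I.OrdConnected) (hS : S ⊆ I) {d p m : ℤ}
    (hd : 0 < d) (hp : p ∈ I) (hAP : ∀ m ∈ I, d ∣ m - p → m ∈ S)
    (hgap : ∀ a ∈ S, ∀ b ∈ S, a < b → d ≤ b - a) (hm : m ∈ S) : d ∣ m - p := by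
  rw [Int.dvd_iff_emod_eq_zero]
  by_contra hr
  set r := (m - p) % d
  set k := (m - p) / d
  have hr0 : 0 < r := lt_of_le_of_ne (Int.emod_nonneg _ hd.ne') (Ne.symm hr)
  have hrd : r < d := Int.emod_lt_of_pos _ hd
  have hdiv : m - p = d * k + r := (Int.mul_ediv_add_emod _ _).symm
  -- the term `m - r` of `p + dℤ` below `m`, or the term `m + (d - r)` above it, lies between
  -- `p` and `m`, and is closer than `d` to `m`
  rcases le_or_gt 0 k with hk | hk
  · have hmem : m - r ∈ I := hI.out hp (hS hm) ⟨by nlinarith, by linarith⟩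
    have := hgap _ (hAP _ hmem ⟨k, by linarith⟩) m hm (by linarith)
    linarith
  · have hmem : m + (d - r) ∈ I := hI.out (hS hm) hp ⟨by linarith, by nlinarith⟩
    have := hgap m hm _ (hAP _ hmem ⟨k + 1, by linarith⟩) (by linarith)
    linarith

/-- The case `k = l` of the BGP(t) constraint for a set `S` of integers inside a window `I`. -/
def ReflClosed (t : ℕ) (I S : Set ℤ) : Prop :=
  ∀ p ∈ S, ∀ q ∈ S, |q - p| ≤ t → 2 * q - p ∈ I → 2 * q - p ∈ S

namespace ReflClosed

variable {t : ℕ} {I S : Set ℤ}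

theorem add_mul_mem (h : ReflClosed t I S) (hI : I.OrdConnected) (hS : S ⊆ I) {d : ℤ}
    (hd : |d| ≤ t) : ∀ s : ℕ, ∀ p ∈ S, p + d ∈ S → p + s * d ∈ I → p + s * d ∈ S
  | 0, p, hp, _, _ => by simpa using hp
  | 1, _, _, hpd, _ => by simpa using hpd
  | s + 2, p, hp, hpd, hend => by
    have hp2 : p + 2 * d ∈ I := by
      refine hI.uIcc_subset (hS hp) hend (mem_uIcc.mpr ?_)
      rcases le_total 0 d with hd0 | hd0
      · left; constructor <;> push_cast <;> nlinarith
      · right; constructor <;> push_cast <;> nlinarith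
    have hrefl : p + 2 * d ∈ S := by
      have := h p hp (p + d) hpd (by simpa using hd) (by convert hp2 using 1; ring)
      convert this using 1; ring
    have := add_mul_mem h hI hS hd (s + 1) (p + d) hpd (by convert hrefl using 1; ring)
      (by convert hend using 1; push_cast; ring)
    convert this using 1; push_cast; ring

theorem mem_of_dvd_sub (h : ReflClosed t I S) (hI : I.OrdConnected) (hS : S ⊆ I) {d p m : ℤ}
    (hd : |d| ≤ t) (hp : p ∈ S) (hpd : p + d ∈ S) (hm : m ∈ I) (hdvd : d ∣ m - p) : m ∈ S := by
  obtain ⟨j, hj⟩ := hdvd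
  rcases le_or_gt 0 j with hj0 | hj0
  · obtain ⟨s, rfl⟩ := Int.eq_ofNat_of_zero_le hj0
    have hms : m = p + s * d := by linear_combination hj
    rw [hms] at hm ⊢
    exact h.add_mul_mem hI hS hd s p hp hpd hm
  · -- walk down from `p + d` in steps of `-d`
    obtain ⟨s, hs⟩ := Int.eq_ofNat_of_zero_le (by omega : 0 ≤ 1 - j)
    have hms : m = p + d + s * (-d) := by rw [← hs]; linear_combination hj
    rw [hms] at hm ⊢
    exact h.add_mul_mem hI hS (by rwa [abs_neg]) s (p + d) hpd (by simpa using hp) hm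

theorem exists_forall_mem_iff_dvd (h : ReflClosed t I S) (hI : I.OrdConnected) (hS : S ⊆ I)
    {a b : ℤ} (ha : a ∈ S) (hb : b ∈ S) (hab : a < b) (hba : b - a ≤ t) :
    ∃ d : ℕ, 0 < d ∧ d ≤ t ∧ ∃ p : ℤ, ∀ m ∈ I, m ∈ S ↔ (d : ℤ) ∣ m - p := by
  classical
  have hgap : ∃ g : ℕ, 0 < g ∧ ∃ p ∈ S, p + g ∈ S :=
    ⟨(b - a).toNat, by omega, a, ha,
      by rwa [Int.toNat_of_nonneg (by omega : 0 ≤ b - a), add_sub_cancel]⟩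
  -- `d` is the smallest gap between two points of `S`
  obtain ⟨hd0, p, hp, hpd⟩ := Nat.find_spec hgap
  set d := Nat.find hgap
  have hmin : ∀ u ∈ S, ∀ v ∈ S, u < v → (d : ℤ) ≤ v - u := fun u hu v hv huv => by
    have := Nat.find_min' hgap (m := (v - u).toNat)
      ⟨by omega, u, hu, by rwa [Int.toNat_of_nonneg (by omega : 0 ≤ v - u), add_sub_cancel]⟩
    omega
  have hdt : d ≤ t := by have := hmin a ha b hb hab; omega
  have hAP : ∀ m ∈ I, (d : ℤ) ∣ m - p → m ∈ S := fun m hm =>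
    h.mem_of_dvd_sub hI hS (by rw [abs_of_nonneg (by positivity)]; exact_mod_cast hdt) hp hpd hm
  exact ⟨d, hd0, hdt, p, fun m hm =>
    ⟨dvd_sub_of_forall_le_sub hI hS (by omega) (hS hp) hAP hmin, hAP m hm⟩⟩

end ReflClosed

section Sequences

variable {t n : ℕ}

def intSupport (x : Fin n → Fin 2) : Set ℤ :=
  {m | ∃ i : Fin n, (x i).val ≠ 0 ∧ ((i : ℕ) : ℤ) = m}

theorem intSupport_subset_Ico (x : Fin n → Fin 2) : intSupport x ⊆ Ico 0 (n : ℤ) := by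
  rintro _ ⟨i, -, rfl⟩
  exact ⟨by positivity, by exact_mod_cast i.2⟩

theorem coe_mem_intSupport {x : Fin n → Fin 2} {i : Fin n} :
    ((i : ℕ) : ℤ) ∈ intSupport x ↔ (x i).val ≠ 0 :=
  ⟨fun ⟨j, hj, hji⟩ => by rwa [← (Fin.ext (by exact_mod_cast hji) : j = i)],
    fun hi => ⟨i, hi, rfl⟩⟩

theorem exists_fin_coe_eq {m : ℤ} (hm : m ∈ Ico 0 (n : ℤ)) : ∃ i : Fin n, ((i : ℕ) : ℤ) = m :=
  ⟨⟨m.toNat, by have := hm.1; have := hm.2; omega⟩, by simp [hm.1]⟩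

theorem reflClosed_intSupport {x : Fin n → Fin 2} (hx : x ∈ B2t t n) :
    ReflClosed t (Ico 0 (n : ℤ)) (intSupport x) := by
  rintro _ ⟨k, hk, rfl⟩ _ ⟨l, hl, rfl⟩ hlk hmem
  obtain ⟨i, hi⟩ := exists_fin_coe_eq hmem
  rw [← hi]
  refine coe_mem_intSupport.mpr (hx l l k hl hl hk ?_ i (by rw [hi]; ring))
  simpa [abs_sub_comm] using hlk

theorem exists_close_pair_of_notMem_Sinf {x : Fin n → Fin 2} (hx : x ∉ Sinf t n) :
    ∃ a ∈ intSupport x, ∃ b ∈ intSupport x, a < b ∧ b - a ≤ t := by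
  simp only [Sinf, mem_ofPred_eq, not_forall, not_lt] at hx
  obtain ⟨i, j, hi, hj, hij, hle⟩ := hx
  have hij' : ((i : ℕ) : ℤ) ≠ ((j : ℕ) : ℤ) := fun h => hij (Fin.ext (by exact_mod_cast h))
  rcases hij'.lt_or_gt with h | h
  · rw [abs_sub_comm] at hle
    exact ⟨_, ⟨i, hi, rfl⟩, _, ⟨j, hj, rfl⟩, h, (le_abs_self _).trans hle⟩
  · exact ⟨_, ⟨j, hj, rfl⟩, _, ⟨i, hi, rfl⟩, h, (le_abs_self _).trans hle⟩

theorem mem_Q_of_forall_dvd_iff {x : Fin n → Fin 2} {d : ℕ} (hd : 0 < d) (hdt : d ≤ t) (p : ℤ)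
    (h : ∀ i : Fin n, (x i).val ≠ 0 ↔ (d : ℤ) ∣ (i : ℕ) - p) : x ∈ Q t n := by
  have hr0 : 0 ≤ p % d := Int.emod_nonneg _ (by omega)
  have hrd : p % d < d := Int.emod_lt_of_pos _ (by omega)
  refine ⟨(p % d).toNat + 1, d, by omega, hdt, fun i => ?_⟩
  have hmod : (d : ℤ) ∣ (i : ℕ) - p ↔ (d : ℤ) ∣ (i : ℕ) - p % d := by
    rw [Int.emod_def, show ((i : ℕ) : ℤ) - (p - d * (p / d)) = (i - p) + d * (p / d) by ring]
    exact (dvd_add_left (dvd_mul_right _ _)).symm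
  rw [h i, hmod]
  push_cast
  rw [Int.toNat_of_nonneg hr0]
  exact ⟨fun ⟨j, hj⟩ => ⟨j, by linarith⟩, fun ⟨j, hj⟩ => ⟨j, by linarith⟩⟩

theorem Sinf_subset_B2t : Sinf t n ⊆ B2t t n := by
  intro x hx k l m hk hl hm hmax i hi
  have hkl : |((k : ℕ) : ℤ) - l| ≤ t := (le_max_left _ _).trans ((le_max_left _ _).trans hmax)
  have hlm : |((l : ℕ) : ℤ) - m| ≤ t := (le_max_right _ _).trans ((le_max_left _ _).trans hmax)
  obtain rfl : k = l := by_contra fun h => (hx k l hk hl h).not_ge hkl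
  obtain rfl : k = m := by_contra fun h => (hx k m hk hm h).not_ge hlm
  rwa [Fin.ext (by omega : (i : ℕ) = k)]

theorem Q_subset_B2t : Q t n ⊆ B2t t n := by
  rintro x ⟨a, d, -, -, hx⟩ k l m hk hl hm - i hi
  obtain ⟨jk, hjk⟩ := (hx k).mp hk
  obtain ⟨jl, hjl⟩ := (hx l).mp hl
  obtain ⟨jm, hjm⟩ := (hx m).mp hm
  exact (hx i).mpr ⟨jk + jl - jm, by linear_combination hi + hjk + hjl - hjm⟩

theorem B2t_diff_Sinf_subset_Q : B2t t n \ Sinf t n ⊆ Q t n := by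
  rintro x ⟨hB, hS⟩
  obtain ⟨a, ha, b, hb, hab, hba⟩ := exists_close_pair_of_notMem_Sinf hS
  obtain ⟨d, hd, hdt, p, hp⟩ := (reflClosed_intSupport hB).exists_forall_mem_iff_dvd
    ordConnected_Ico (intSupport_subset_Ico x) ha hb hab hba
  refine mem_Q_of_forall_dvd_iff hd hdt p fun i => ?_
  rw [← coe_mem_intSupport]
  exact hp _ ⟨by positivity, by exact_mod_cast i.2⟩

end Sequences

theorem B2t_eq_Sinf_union_Q_general (n t : ℕ) :
    B2t t n = Sinf t n ∪ Q t n :=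
  Subset.antisymm (sdiff_subset_iff.mp B2t_diff_Sinf_subset_Q)
    (union_subset Sinf_subset_B2t Q_subset_B2t)

/-- **Theorem 5.** For all integers `n, t ≥ 1`,
`B_{2;t}(n) = S_{t,∞}(n) ∪ Q_t(n)`. -/
theorem B2t_eq_Sinf_union_Q (n t : ℕ) (hn : 1 ≤ n) (ht : 1 ≤ t) :
    B2t t n = Sinf t n ∪ Q t n :=
  B2t_eq_Sinf_union_Q_general n t
end

section
/- Let j ≥ 1 be an integer with j ≠ 3 and j ≠ 5, and let x = (x_1,…,x_j) = ψ(1^j) be the sign pattern defined in the context. Then for all k, l, m ∈ [j] with x_k = x_l = x_m and max{|k−l|,|l−m|,|m−k|} ≤ 2, one has k+l−m ∈ [j]. (Lemma 10) -/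
/-!
With `m ≤ min k l + 2`, the index `k + l - m` can leave `[0, j)` only for a triple within the
first four or the last four positions. For `j ≠ 3, 5`, the pattern `ψ(1^j)` takes different signs at
every pair of positions that such a triple would need to carry equal signs.
-/

/-- The sign pattern `ψ(1^j)` of length `j`, with positions 0-indexed
(position `i` here is the paper's position `i + 1`): `ψ(1^1) = (+)`,
`ψ(1^2) = (+,-)`, `ψ(1^3) = (+,-,+)`, `ψ(1^4) = (+,-,-,+)`,
`ψ(1^5) = (+,-,+,+,-)`, `ψ(1^6) = (+,-,-,+,+,-)`, and for `j ≥ 7`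
`ψ(1^j) = (+,-,-, +,…,+ ,-,-,+)` with `j - 6` pluses in the middle; equivalently,
the `-1` entries are at 0-indexed positions `1, 2, j-3, j-2` when `j ≥ 7`. -/
def psiSign (j i : ℕ) : ℤ :=
  if (j = 2 ∧ i = 1) ∨ (j = 3 ∧ i = 1) ∨ (j = 4 ∧ (i = 1 ∨ i = 2)) ∨
     (j = 5 ∧ (i = 1 ∨ i = 4)) ∨ (j = 6 ∧ (i = 1 ∨ i = 2 ∨ i = 5)) ∨
     (7 ≤ j ∧ (i = 1 ∨ i = 2 ∨ i = j - 3 ∨ i = j - 2))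
  then -1 else 1

variable {α : Type*}

def IsSeparatedAtStart (x : ℕ → α) (j : ℕ) : Prop :=
  (1 < j → x 0 ≠ x 1) ∧ (2 < j → x 0 ≠ x 2) ∧ (3 < j → x 1 ≠ x 3)

/-- The only index triples with `k + l < m ≤ min k l + 2` are `(0,0,1)`, `(0,0,2)`, `(0,1,2)`,
`(1,0,2)` and `(1,1,3)`, and separation at the start gives each of them two different values. -/
theorem le_add_of_isSeparatedAtStart {x : ℕ → α} {j k l m : ℕ} (hx : IsSeparatedAtStart x j)
    (hm : m < j) (hkl : x k = x l) (hlm : x l = x m) (hmk : m ≤ k + 2) (hml : m ≤ l + 2) :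
    m ≤ k + l := by
  obtain ⟨h01, h02, h13⟩ := hx
  by_contra! hlt
  have hkm : x k = x m := hkl.trans hlm
  rcases (by omega : (k = 0 ∧ l = 0 ∧ m = 1) ∨ (k = 0 ∧ l = 0 ∧ m = 2) ∨ (k = 0 ∧ l = 1 ∧ m = 2) ∨
      (k = 1 ∧ l = 0 ∧ m = 2) ∨ (k = 1 ∧ l = 1 ∧ m = 3)) with
    ⟨rfl, rfl, rfl⟩ | ⟨rfl, rfl, rfl⟩ | ⟨rfl, rfl, rfl⟩ | ⟨rfl, rfl, rfl⟩ | ⟨rfl, rfl, rfl⟩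
  · exact h01 hm hkm
  · exact h02 hm hkm
  · exact h01 (by omega) hkl
  · exact h01 (by omega) hkl.symm
  · exact h13 hm hkm

/-- The upper bound is the lower bound for the reversed sequence `i ↦ x (j - 1 - i)`. -/
theorem add_sub_mem_range_of_isSeparatedAtStart {x : ℕ → α} {j k l m : ℕ}
    (hstart : IsSeparatedAtStart x j) (hend : IsSeparatedAtStart (fun i => x (j - 1 - i)) j)
    (hk : k < j) (hl : l < j) (hm : m < j) (hkl : x k = x l) (hlm : x l = x m)
    (hmk : m ≤ k + 2) (hml : m ≤ l + 2) (hkm : k ≤ m + 2) (hlm' : l ≤ m + 2) :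
    0 ≤ (k : ℤ) + l - m ∧ (k : ℤ) + l - m < j := by
  have hlow := le_add_of_isSeparatedAtStart hstart hm hkl hlm hmk hml
  have hrev : ∀ i < j, x (j - 1 - (j - 1 - i)) = x i := fun i hi => by
    rw [Nat.sub_sub_self (by omega)]
  have hhigh := le_add_of_isSeparatedAtStart hend (k := j - 1 - k) (l := j - 1 - l)
    (m := j - 1 - m) (by omega) (by simp only [hrev k hk, hrev l hl, hkl])
    (by simp only [hrev l hl, hrev m hm, hlm]) (by omega) (by omega)
  omega

theorem psiSign_of_seven_le {j : ℕ} (hj : 7 ≤ j) (i : ℕ) :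
    psiSign j i = if i = 1 ∨ i = 2 ∨ i = j - 3 ∨ i = j - 2 then -1 else 1 := by
  unfold psiSign
  congr 1
  simp only [show j ≠ 2 by omega, show j ≠ 3 by omega, show j ≠ 4 by omega,
    show j ≠ 5 by omega, show j ≠ 6 by omega, hj, false_and, false_or, true_and]

theorem isSeparatedAtStart_psiSign {j : ℕ} (hj3 : j ≠ 3) (hj5 : j ≠ 5) :
    IsSeparatedAtStart (psiSign j) j ∧ IsSeparatedAtStart (fun i => psiSign j (j - 1 - i)) j := by
  rcases le_or_gt j 6 with hj | hj
  · unfold IsSeparatedAtStart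
    interval_cases j <;> first | contradiction | decide
  · simp only [IsSeparatedAtStart, psiSign_of_seven_le hj]
    refine ⟨⟨?_, ?_, ?_⟩, ?_, ?_, ?_⟩ <;> intro <;> split_ifs <;> simp_all <;> omega

theorem psi_closed_under_triples_general (j : ℕ) (hj3 : j ≠ 3) (hj5 : j ≠ 5)
    (k l m : Fin j)
    (hkl : psiSign j k = psiSign j l) (hlm : psiSign j l = psiSign j m)
    (hd : max (max |((k : ℕ) : ℤ) - ((l : ℕ) : ℤ)| |((l : ℕ) : ℤ) - ((m : ℕ) : ℤ)|)
              |((m : ℕ) : ℤ) - ((k : ℕ) : ℤ)| ≤ 2) :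
    0 ≤ ((k : ℕ) : ℤ) + ((l : ℕ) : ℤ) - ((m : ℕ) : ℤ) ∧
    ((k : ℕ) : ℤ) + ((l : ℕ) : ℤ) - ((m : ℕ) : ℤ) < (j : ℤ) := by
  obtain ⟨hstart, hend⟩ := isSeparatedAtStart_psiSign hj3 hj5
  simp only [max_le_iff, abs_le] at hd
  exact add_sub_mem_range_of_isSeparatedAtStart hstart hend k.isLt l.isLt m.isLt hkl hlm
    (by omega) (by omega) (by omega) (by omega)

/-- **Lemma 10.** Let `j ≥ 1` with `j ≠ 3` and `j ≠ 5`, and let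
`x = ψ(1^j)`. Then for all positions `k, l, m` of `x` with `x k = x l = x m` and
`max {|k-l|, |l-m|, |m-k|} ≤ 2`, the integer `k + l - m` is again a valid position
of `x` (i.e. lies in `[0, j)` in 0-indexed terms, `[j]` in the paper's). -/
theorem psi_closed_under_triples (j : ℕ) (hj : 1 ≤ j) (hj3 : j ≠ 3) (hj5 : j ≠ 5)
    (k l m : Fin j)
    (hkl : psiSign j k = psiSign j l) (hlm : psiSign j l = psiSign j m)
    (hd : max (max |((k : ℕ) : ℤ) - ((l : ℕ) : ℤ)| |((l : ℕ) : ℤ) - ((m : ℕ) : ℤ)|)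
              |((m : ℕ) : ℤ) - ((k : ℕ) : ℤ)| ≤ 2) :
    0 ≤ ((k : ℕ) : ℤ) + ((l : ℕ) : ℤ) - ((m : ℕ) : ℤ) ∧
    ((k : ℕ) : ℤ) + ((l : ℕ) : ℤ) - ((m : ℕ) : ℤ) < (j : ℤ) :=
  psi_closed_under_triples_general j hj3 hj5 k l m hkl hlm hd
end

section
/- Fix t ≥ 1. A bi-infinite ternary sequence x = {x_j}_{j∈ℤ} over A_3 = {-1,0,1} satisfies the TGP(t) constraint if and only if for every j ∈ ℤ its window (x_{j−t}, …, x_{j+2t}) of length 3t+1 satisfies the local condition: for all k, l, m ∈ [j, j+t] with x_k = x_l = x_m and x_k ≠ 0, one has x_{k+l−m} ≠ 0. (Content of Theorem 13: the set T*_{3;t} of bi-infinite TGP(t)-constrained sequences equals the sofic shift of the graph G_{3;t} whose vertices are exactly the windows satisfying this local condition.) -/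
/-- A bi-infinite ternary sequence `x : ℤ → ℤ` (entries in `{-1, 0, 1}`) satisfies
the TGP(t) constraint: for all `k, l, m ∈ ℤ` with
`max {|k-l|, |l-m|, |m-k|} ≤ t` such that `x k, x l, x m` are equal and nonzero,
`x (k + l - m)` is also nonzero. -/
def SatisfiesTGPtBiInf (t : ℕ) (x : ℤ → ℤ) : Prop :=
  ∀ k l m : ℤ, x k ≠ 0 → x k = x l → x l = x m →
    max (max |k - l| |l - m|) |m - k| ≤ (t : ℤ) →
    x (k + l - m) ≠ 0

theorem exists_window_iff_max_abs_sub_le (k l m t : ℤ) :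
    (∃ j, j ≤ k ∧ k ≤ j + t ∧ j ≤ l ∧ l ≤ j + t ∧ j ≤ m ∧ m ≤ j + t) ↔
      max (max |k - l| |l - m|) |m - k| ≤ t := by
  simp only [max_le_iff, abs_le]
  constructor
  · rintro ⟨j, _⟩
    omega
  · intro h
    exact ⟨min k (min l m), by omega⟩

theorem tgp_biinfinite_iff_local_general (t : ℕ) (x : ℤ → ℤ) :
    SatisfiesTGPtBiInf t x ↔
      ∀ j k l m : ℤ, j ≤ k → k ≤ j + t → j ≤ l → l ≤ j + t → j ≤ m → m ≤ j + t →
        x k ≠ 0 → x k = x l → x l = x m → x (k + l - m) ≠ 0 := by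
  constructor
  · intro h j k l m hjk hkj hjl hlj hjm hmj
    exact fun hk hkl hlm ↦ h k l m hk hkl hlm
      ((exists_window_iff_max_abs_sub_le k l m t).mp ⟨j, hjk, hkj, hjl, hlj, hjm, hmj⟩)
  · intro h k l m hk hkl hlm hdiam
    obtain ⟨j, hjk, hkj, hjl, hlj, hjm, hmj⟩ :=
      (exists_window_iff_max_abs_sub_le k l m t).mpr hdiam
    exact h j k l m hjk hkj hjl hlj hjm hmj hk hkl hlm

/-- **Content of Theorem 13.** Fix `t ≥ 1`. A bi-infinite ternary sequence `x`
satisfies the TGP(t) constraint if and only if for every `j ∈ ℤ` its window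
`(x_{j-t}, …, x_{j+2t})` satisfies the local condition: for all
`k, l, m ∈ [j, j+t]` with `x k = x l = x m` and `x k ≠ 0`, one has
`x (k + l - m) ≠ 0` (note `k + l - m ∈ [j-t, j+2t]` automatically). -/
theorem tgp_biinfinite_iff_local (t : ℕ) (ht : 1 ≤ t) (x : ℤ → ℤ)
    (hx : ∀ i : ℤ, x i = -1 ∨ x i = 0 ∨ x i = 1) :
    SatisfiesTGPtBiInf t x ↔
      ∀ j k l m : ℤ, j ≤ k → k ≤ j + t → j ≤ l → l ≤ j + t → j ≤ m → m ≤ j + t →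
        x k ≠ 0 → x k = x l → x l = x m → x (k + l - m) ≠ 0 :=
  tgp_biinfinite_iff_local_general t x
end
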